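/- arXiv:2603.23905 — 2 statements merged into one kernel-verified Lean document; each statement's English description precedes it below -/
import Mathlib

section
/- Fix an integer ℓ ≥ 1 and real numbers M, Q, and r with r ≠ 0. Set λ² = ℓ(ℓ+1) and c(r) = 1 − 3M/r + 2Q²/r², and define the real 2×2 matrices A_ℓ(r) = [[λ² + 2c(r), −2c(r)], [−2λ², λ²]], T_ℓ = [[1, 1], [ℓ+1, −ℓ]], S_ℓ = (1/(2ℓ+1))·[[ℓ, 1], [ℓ+1, −1]], D_ℓ = diag(ℓ(ℓ−1), (ℓ+1)(ℓ+2)), and C_ℓ = [[ℓ², −ℓ(ℓ+1)], [ℓ(ℓ+1), −(ℓ+1)²]]. Then S_ℓ·T_ℓ = T_ℓ·S_ℓ = Id (so S_ℓ = T_ℓ⁻¹), and the conjugation identity S_ℓ·A_ℓ(r)·T_ℓ = D_ℓ + (6M/((2ℓ+1)·r))·C_ℓ − (4Q²/((2ℓ+1)·r²))·C_ℓ holds. In particular the r-independent part diagonalizes exactly, with diagonal entries ℓ(ℓ−1) = L₋₁(L₋₁+1) and (ℓ+1)(ℓ+2) = L₊₁(L₊₁+1) for the effective angular momenta L₋₁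 = ℓ−1 and L₊₁ = ℓ+1. -/
set_option maxHeartbeats 1600000


/-- Even-sector polarization diagonalization for Proca on Reissner–Nordström:
the constant matrix `T_ℓ` (with inverse `S_ℓ`) conjugates the even coefficient
matrix `A_ℓ(r)` into `D_ℓ + (6M/((2ℓ+1)r))C_ℓ − (4Q²/((2ℓ+1)r²))C_ℓ`, with the
`r`-independent part exactly diagonal with entries `L₋₁(L₋₁+1)` and `L₊₁(L₊₁+1)`
for the effective angular momenta `L₋₁ = ℓ−1`, `L₊₁ = ℓ+1`. -/
theorem stmt_1 (ℓ : ℕ) (hℓ : 1 ≤ ℓ) (M Q r : ℝ) (hr : r ≠ 0) :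
    let l : ℝ := (ℓ : ℝ)
    let lam2 : ℝ := l * (l + 1)
    let c : ℝ := 1 - 3 * M / r + 2 * Q ^ 2 / r ^ 2
    let A : Matrix (Fin 2) (Fin 2) ℝ := !![lam2 + 2 * c, -(2 * c); -(2 * lam2), lam2]
    let T : Matrix (Fin 2) (Fin 2) ℝ := !![1, 1; l + 1, -l]
    let S : Matrix (Fin 2) (Fin 2) ℝ := (1 / (2 * l + 1)) • !![l, 1; l + 1, -1]
    let D : Matrix (Fin 2) (Fin 2) ℝ := !![l * (l - 1), 0; 0, (l + 1) * (l + 2)]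
    let C : Matrix (Fin 2) (Fin 2) ℝ :=
      !![l ^ 2, -(l * (l + 1)); l * (l + 1), -((l + 1) ^ 2)]
    S * T = 1 ∧ T * S = 1 ∧
    S * A * T = D + (6 * M / ((2 * l + 1) * r)) • C - (4 * Q ^ 2 / ((2 * l + 1) * r ^ 2)) • C ∧
    l * (l - 1) = (l - 1) * ((l - 1) + 1) ∧
    (l + 1) * (l + 2) = (l + 1) * ((l + 1) + 1) := by
  intro l lam2 c A T S D C
  have hl : (1:ℝ) ≤ l := by exact_mod_cast Nat.one_le_cast.mpr hℓ
  have h2l : (2 * l + 1) ≠ 0 := by nlinarith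
  refine ⟨?_, ?_, ?_, by ring, by ring⟩ <;>
  · ext i j
    fin_cases i <;> fin_cases j <;>
      simp [A, T, S, D, C, lam2, c, Matrix.mul_apply, Fin.sum_univ_two,
        Matrix.one_apply] <;>
      field_simp <;> ring
end

section
/- For every L > 0 and every c > 0 and C > 0 there exists a constant C_L ≥ 0 such that for all real t ≥ 2: ∑_{j=0}^∞ 2^{−jL}·exp(−c·t·exp(−C·2^j)) ≤ C_L·(log(2+t))^{−L}. (The series converges since each term is bounded by 2^{−jL}.) -/
/-!
Write `r = 2^(-L) < 1` and `λ = log (2 + t)`, and split the series at the largest `J` with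
`C·2^J ≲ λ/2`. On the tail the geometric weights alone give `∑_{j>J} r^j ≲ r^J ≈ λ^(-L)`.
On the head `exp(-C·2^j) ≥ e^(-C)/√(2+t)`, so each damping factor is at most
`exp(-c e^(-C) t/√(2+t)) ≤ √(2+t)/(c e^(-C) t)`, which beats `λ^L ≲ √(2+t)` uniformly in `t ≥ 2`.
-/

open Real Finset

theorem summable_and_tsum_le_of_le_geometric {f : ℕ → ℝ} {r ε : ℝ} (J : ℕ)
    (hr₀ : 0 ≤ r) (hr₁ : r < 1) (hε : 0 ≤ ε) (hf₀ : ∀ j, 0 ≤ f j) (hf : ∀ j, f j ≤ r ^ j)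
    (hfJ : ∀ j ≤ J, f j ≤ ε * r ^ j) :
    Summable f ∧ ∑' j, f j ≤ (ε + r ^ (J + 1)) / (1 - r) := by
  have hgeom : Summable (r ^ ·) := summable_geometric_of_lt_one hr₀ hr₁
  have hsum : Summable f := hgeom.of_nonneg_of_le hf₀ hf
  refine ⟨hsum, ?_⟩
  have hhead : ∑ j ∈ range (J + 1), f j ≤ ε / (1 - r) := calc
    ∑ j ∈ range (J + 1), f j ≤ ε * ∑ j ∈ range (J + 1), r ^ j := by
      rw [mul_sum]
      exact sum_le_sum fun j hj => hfJ j (Nat.lt_succ_iff.mp (mem_range.mp hj))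
    _ ≤ ε * (r ^ 0 / (1 - r)) := by
      rw [range_eq_Ico]
      gcongr
      exact geom_sum_Ico_le_of_lt_one hr₀ hr₁
    _ = ε / (1 - r) := by rw [pow_zero, mul_one_div]
  have htail : ∑' k, f (k + (J + 1)) ≤ r ^ (J + 1) / (1 - r) := calc
    ∑' k, f (k + (J + 1)) ≤ ∑' k, r ^ (J + 1) * r ^ k :=
      ((summable_nat_add_iff (J + 1)).mpr hsum).tsum_le_tsum
        (fun k => (hf _).trans_eq (by rw [pow_add, mul_comm])) (hgeom.mul_left _)
    _ = r ^ (J + 1) / (1 - r) := by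
      rw [tsum_mul_left, tsum_geometric_of_lt_one hr₀ hr₁, div_eq_mul_inv]
  rw [← hsum.sum_add_tsum_nat_add (J + 1), add_div]
  exact add_le_add hhead htail

theorem exists_two_pow_le_one_add_lt {x : ℝ} (hx : 0 ≤ x) :
    ∃ J : ℕ, (2 : ℝ) ^ J ≤ 1 + x ∧ x < 2 ^ (J + 1) := by
  refine ⟨Nat.log 2 ⌊x⌋₊, ?_, ?_⟩
  · rcases eq_or_ne ⌊x⌋₊ 0 with h | h
    · simp [h, hx]
    · calc (2 : ℝ) ^ Nat.log 2 ⌊x⌋₊ ≤ ⌊x⌋₊ := by exact_mod_cast Nat.pow_log_le_self 2 h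
        _ ≤ 1 + x := by linarith [Nat.floor_le hx]
  · calc x < ⌊x⌋₊ + 1 := Nat.lt_floor_add_one x
      _ ≤ 2 ^ (Nat.log 2 ⌊x⌋₊ + 1) := by
        exact_mod_cast Nat.lt_pow_succ_log_self one_lt_two ⌊x⌋₊

theorem Real.log_rpow_le_mul_sqrt {x L : ℝ} (hx : 1 ≤ x) (hL : 0 < L) :
    log x ^ L ≤ (2 * L) ^ L * √x := by
  have hlog : log x ≤ 2 * L * x ^ (1 / (2 * L)) := by
    have := log_le_rpow_div (x := x) (by linarith) (show 0 < 1 / (2 * L) by positivity)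
    rwa [div_eq_mul_one_div, one_div_one_div, mul_comm] at this
  calc log x ^ L ≤ (2 * L * x ^ (1 / (2 * L))) ^ L :=
        rpow_le_rpow (log_nonneg hx) hlog hL.le
    _ = (2 * L) ^ L * √x := by
      rw [mul_rpow (by positivity) (by positivity), ← rpow_mul (by linarith), sqrt_eq_rpow]
      congr 2
      field_simp

theorem Real.exp_neg_le_inv {x : ℝ} (hx : 0 < x) : exp (-x) ≤ x⁻¹ := by
  rw [exp_neg]
  exact inv_anti₀ hx (by linarith [add_one_le_exp x])

theorem exp_neg_mul_exp_neg_le {L c C t y : ℝ} (hL : 0 < L) (hc : 0 < c) (ht : 2 ≤ t)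
    (hy : C * y ≤ C + log (2 + t) / 2) :
    exp (-c * t * exp (-C * y)) ≤ 2 * (2 * L) ^ L * exp C / c * log (2 + t) ^ (-L) := by
  have hs : 0 < √(2 + t) := by positivity
  have hlog : 0 < log (2 + t) := log_pos (by linarith)
  have hexp : exp (-C) / √(2 + t) ≤ exp (-C * y) := calc
    exp (-C) / √(2 + t) = exp (-(C + log (2 + t) / 2)) := by
      rw [neg_add, exp_add, exp_neg (_ / 2), exp_half, exp_log (by linarith), div_eq_mul_inv]
    _ ≤ exp (-C * y) := exp_le_exp.mpr (by linarith)
  have hX : c * t * (exp (-C) / √(2 + t)) ≤ c * t * exp (-C * y) := by gcongr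
  have hX₀ : 0 < c * t * (exp (-C) / √(2 + t)) := by positivity
  rw [rpow_neg hlog.le, ← div_eq_mul_inv, le_div_iff₀ (rpow_pos_of_pos hlog L), neg_mul, neg_mul]
  calc exp (-(c * t * exp (-C * y))) * log (2 + t) ^ L
      ≤ (c * t * (exp (-C) / √(2 + t)))⁻¹ * ((2 * L) ^ L * √(2 + t)) := by
        gcongr
        · exact (exp_neg_le_inv (hX₀.trans_le hX)).trans (inv_anti₀ hX₀ hX)
        · exact log_rpow_le_mul_sqrt (by linarith) hL
    _ = (2 * L) ^ L * exp C / c * ((2 + t) / t) := by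
      rw [exp_neg]
      field_simp
      rw [sq_sqrt (by linarith)]
    _ ≤ (2 * L) ^ L * exp C / c * 2 := by
      gcongr
      rw [div_le_iff₀ (by linarith)]
      linarith
    _ = 2 * (2 * L) ^ L * exp C / c := by ring

theorem monotone_exp_neg_mul_exp_neg {a C : ℝ} (ha : 0 ≤ a) (hC : 0 ≤ C) :
    Monotone fun x => exp (-a * exp (-C * x)) := fun x y hxy => by
  simp only [neg_mul, exp_le_exp, neg_le_neg_iff]
  gcongr

theorem two_rpow_neg_pow_le {L a : ℝ} {n : ℕ} (hL : 0 ≤ L) (ha : 0 < a) (hn : a ≤ 2 ^ n) :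
    ((2 : ℝ) ^ (-L)) ^ n ≤ a ^ (-L) := by
  rw [← rpow_natCast, ← rpow_mul zero_le_two, mul_comm, rpow_mul zero_le_two, rpow_natCast]
  exact rpow_le_rpow_of_nonpos ha hn (neg_nonpos.mpr hL)

/-- Elementary dyadic logarithmic summation lemma: for `L, c, C > 0` there is
`C_L ≥ 0` with `∑_{j≥0} 2^{−jL}·exp(−c·t·exp(−C·2^j)) ≤ C_L·(log(2+t))^{−L}`
for all `t ≥ 2`; the series converges since each term is at most `2^{−jL}`. -/
theorem stmt_10 (L c C : ℝ) (hL : 0 < L) (hc : 0 < c) (hC : 0 < C) :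
    ∃ CL : ℝ, 0 ≤ CL ∧ ∀ t : ℝ, 2 ≤ t →
      Summable (fun j : ℕ =>
        (2 : ℝ) ^ (-(j : ℝ) * L) * Real.exp (-c * t * Real.exp (-C * (2 : ℝ) ^ j))) ∧
      (∑' j : ℕ,
        (2 : ℝ) ^ (-(j : ℝ) * L) * Real.exp (-c * t * Real.exp (-C * (2 : ℝ) ^ j))) ≤
        CL * (Real.log (2 + t)) ^ (-L) := by
  set r : ℝ := (2 : ℝ) ^ (-L)
  have hr₁ : r < 1 := rpow_lt_one_of_one_lt_of_neg one_lt_two (neg_neg_of_pos hL)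
  have hr₀ : 0 < 1 - r := sub_pos.mpr hr₁
  refine ⟨(2 * (2 * L) ^ L * exp C / c + (2 * C) ^ L) / (1 - r), by positivity,
    fun t ht => ?_⟩
  have hlog : 0 < log (2 + t) := log_pos (by linarith)
  have hpow : ∀ j : ℕ, (2 : ℝ) ^ (-(j : ℝ) * L) = r ^ j := fun j => by
    rw [← rpow_natCast, ← rpow_mul zero_le_two, neg_mul_comm, mul_comm]
  simp_rw [hpow]
  obtain ⟨J, hJ, hJ₁⟩ := exists_two_pow_le_one_add_lt (x := log (2 + t) / (2 * C)) (by positivity)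
  obtain ⟨hsum, hle⟩ := summable_and_tsum_le_of_le_geometric
    (f := fun j => r ^ j * exp (-c * t * exp (-C * 2 ^ j))) J (by positivity) hr₁
    (exp_pos (-c * t * exp (-C * 2 ^ J))).le (fun j => by positivity)
    (fun j => mul_le_of_le_one_right (by positivity) (exp_le_one_iff.mpr (by
      have : 0 ≤ c * t * exp (-C * 2 ^ j) := by positivity
      linarith)))
    (fun j hj => by
      rw [mul_comm, neg_mul c t]
      gcongr ?_ * _
      exact monotone_exp_neg_mul_exp_neg (a := c * t) (by positivity) hC.le
        (pow_le_pow_right₀ one_le_two hj))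
  refine ⟨hsum, ?_⟩
  have hhead := exp_neg_mul_exp_neg_le hL hc ht (y := 2 ^ J) (C := C) (calc
    C * 2 ^ J ≤ C * (1 + log (2 + t) / (2 * C)) := by gcongr
    _ = C + log (2 + t) / 2 := by field_simp)
  have htail : r ^ (J + 1) ≤ (2 * C) ^ L * log (2 + t) ^ (-L) := by
    refine (two_rpow_neg_pow_le hL.le (by positivity) hJ₁.le).trans_eq ?_
    rw [div_rpow hlog.le (by positivity), rpow_neg hlog.le,
      rpow_neg (by positivity : (0 : ℝ) ≤ 2 * C), div_inv_eq_mul, mul_comm]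
  calc _ ≤ _ := hle
    _ ≤ (2 * (2 * L) ^ L * exp C / c * log (2 + t) ^ (-L)
          + (2 * C) ^ L * log (2 + t) ^ (-L)) / (1 - r) := by gcongr
    _ = _ := by ring
end
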